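/- arXiv:0710.5810 — 2 statements merged into one kernel-verified Lean document; each statement's English description precedes it below -/
import Mathlib

section
/- For positive even n and k ≥ 1, [2]_q Σ_{l=0}^{n-1} (-1)^{l-1} q^l l^k = q^n Σ_{m=0}^{k-1} C(k,m) E_{m,q} n^{k-m} + (q^n - 1) E_{k,q}, where E_{m,q} = [2]_q Σ_{j=0}^∞ (-1)^j q^j j^m (with 0^0 = 1). -/
/-- For positive even n and k ≥ 1,
[2]_q Σ_{l=0}^{n-1} (-1)^{l-1} q^l l^k
  = q^n Σ_{m=0}^{k-1} C(k,m) E_{m,q} n^{k-m} + (q^n - 1) E_{k,q}.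
(We write the sign (-1)^{l-1} as (-1)^{l+1}, which agrees for all integers l.) -/
theorem q_euler_sum_products (q : ℂ) (hq : ‖q‖ < 1) (n k : ℕ) (hn : 0 < n) (hne : Even n)
    (hk : 1 ≤ k)
    (E : ℕ → ℂ)
    (hE : ∀ m : ℕ, E m = (1 + q) * ∑' j : ℕ, (-1) ^ j * q ^ j * (j : ℂ) ^ m) :
    (1 + q) * ∑ l ∈ Finset.range n, (-1) ^ (l + 1) * q ^ l * (l : ℂ) ^ k
      = q ^ n * ∑ m ∈ Finset.range k, (k.choose m : ℂ) * E m * (n : ℂ) ^ (k - m)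
        + (q ^ n - 1) * E k := by
  have hq' : ‖-q‖ < 1 := by simpa using hq
  have hsum : ∀ m : ℕ, Summable (fun j : ℕ => (-1 : ℂ) ^ j * q ^ j * (j : ℂ) ^ m) := by
    intro m
    refine (summable_pow_mul_geometric_of_norm_lt_one m hq').congr fun j => ?_
    rw [neg_pow]
    ring
  set T : ℕ → ℂ := fun m => ∑' j : ℕ, (-1 : ℂ) ^ j * q ^ j * (j : ℂ) ^ m with hT
  have split : ∀ m : ℕ, (∑ l ∈ Finset.range n, (-1 : ℂ) ^ l * q ^ l * (l : ℂ) ^ m)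
      + ∑' j : ℕ, (-1 : ℂ) ^ (j + n) * q ^ (j + n) * ((j + n : ℕ) : ℂ) ^ m = T m :=
    fun m => Summable.sum_add_tsum_nat_add n (hsum m)
  have h1 : ∀ j : ℕ, (-1 : ℂ) ^ (j + n) * q ^ (j + n) * ((j + n : ℕ) : ℂ) ^ k
      = ∑ m ∈ Finset.range (k + 1),
          q ^ n * ((k.choose m : ℂ) * (n : ℂ) ^ (k - m) * ((-1) ^ j * q ^ j * (j : ℂ) ^ m)) := by
    intro j
    push_cast
    rw [add_pow, Finset.mul_sum]
    refine Finset.sum_congr rfl fun m _ => ?_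
    rw [pow_add, pow_add, Even.neg_one_pow hne]
    ring
  have tail : (∑' j : ℕ, (-1 : ℂ) ^ (j + n) * q ^ (j + n) * ((j + n : ℕ) : ℂ) ^ k)
      = q ^ n * ∑ m ∈ Finset.range (k + 1), (k.choose m : ℂ) * (n : ℂ) ^ (k - m) * T m := by
    rw [tsum_congr h1, Summable.tsum_finsetSum (fun m _ => ((hsum m).mul_left _).mul_left _)]
    rw [Finset.mul_sum]
    refine Finset.sum_congr rfl fun m _ => ?_
    rw [tsum_mul_left, tsum_mul_left]
  have hA : ∑ m ∈ Finset.range k, (k.choose m : ℂ) * E m * (n : ℂ) ^ (k - m)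
      = (1 + q) * ∑ m ∈ Finset.range k, (k.choose m : ℂ) * (n : ℂ) ^ (k - m) * T m := by
    rw [Finset.mul_sum]
    exact Finset.sum_congr rfl fun m _ => by rw [hE]; ring
  have hL : ∑ l ∈ Finset.range n, (-1 : ℂ) ^ (l + 1) * q ^ l * (l : ℂ) ^ k
      = -(∑ l ∈ Finset.range n, (-1 : ℂ) ^ l * q ^ l * (l : ℂ) ^ k) := by
    rw [← Finset.sum_neg_distrib]
    exact Finset.sum_congr rfl fun l _ => by ring
  have hsplit := split k
  rw [tail, Finset.sum_range_succ, Nat.choose_self, Nat.sub_self] at hsplit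
  rw [hL, hA, hE k]
  simp only [Nat.cast_one, pow_zero] at hsplit
  linear_combination (-(1 + q)) * hsplit
end

section
/- For odd f ∈ ℕ, the distribution relation E_{n,q}(x) = (f^n [2]_q / [2]_{q^f}) Σ_{a=0}^{f-1} (-1)^a q^a E_{n,q^f}((a+x)/f) holds, where E_{n,q}(x) = [2]_q Σ_{j=0}^∞ (-1)^j q^j (j+x)^n. -/
lemma aux_summable (r : ℂ) (hr : ‖r‖ < 1) (y : ℂ) (n : ℕ) :
    Summable fun k : ℕ => r ^ k * ((k : ℂ) + y) ^ n := by
  have h : (fun k : ℕ => r ^ k * ((k : ℂ) + y) ^ n)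
      = fun k : ℕ => ∑ i ∈ Finset.range (n + 1),
          (y ^ (n - i) * (n.choose i : ℂ)) * ((k : ℂ) ^ i * r ^ k) := by
    funext k
    rw [add_pow, Finset.mul_sum]
    refine Finset.sum_congr rfl fun i _ => by ring
  rw [h]
  exact summable_sum fun i _ =>
    ((summable_pow_mul_geometric_of_norm_lt_one i hr).mul_left _)

/-- For odd f, the distribution relation
E_{n,q}(x) = (f^n [2]_q / [2]_{q^f}) Σ_{a=0}^{f-1} (-1)^a q^a E_{n,q^f}((a+x)/f). -/
theorem q_euler_distribution (q : ℂ) (hq0 : q ≠ 0) (hq : ‖q‖ < 1)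
    (f : ℕ) (hf : Odd f) (hf0 : 0 < f) (x : ℝ) (hx : 0 < x) (n : ℕ)
    (E : ℂ → ℕ → ℝ → ℂ)
    (hE : ∀ (Q : ℂ) (m : ℕ) (y : ℝ),
      E Q m y = (1 + Q) * ∑' j : ℕ, (-1) ^ j * Q ^ j * (((j : ℝ) + y : ℝ) : ℂ) ^ m) :
    E q n x = ((f : ℂ) ^ n * (1 + q) / (1 + q ^ f)) *
        ∑ a ∈ Finset.range f, (-1) ^ a * q ^ a * E (q ^ f) n (((a : ℝ) + x) / (f : ℝ)) := by
  have : NeZero f := ⟨hf0.ne'⟩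
  have hqf : ‖q ^ f‖ < 1 := by
    rw [norm_pow]; exact pow_lt_one₀ (norm_nonneg q) hq hf0.ne'
  have h1 : (1 : ℂ) + q ^ f ≠ 0 := by
    intro h
    have h2 : q ^ f = -1 := by linear_combination h
    rw [h2] at hqf; simp at hqf
  have hfR : (f : ℝ) ≠ 0 := Nat.cast_ne_zero.mpr hf0.ne'
  have hfC : (f : ℂ) ≠ 0 := Nat.cast_ne_zero.mpr hf0.ne'
  have hfnC : (f : ℂ) ^ n ≠ 0 := pow_ne_zero _ hfC
  set g : ℕ → ℂ := fun k => (-q) ^ k * ((k : ℂ) + (x : ℂ)) ^ n with hgdef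
  have hg : Summable g := aux_summable (-q) (by simpa using hq) x n
  -- LHS
  rw [hE]
  have hL : (fun j : ℕ => (-1 : ℂ) ^ j * q ^ j * (((j : ℝ) + x : ℝ) : ℂ) ^ n) = g := by
    funext j
    simp only [hgdef]
    rw [neg_pow]
    push_cast
    ring
  rw [hL]
  -- RHS inner terms
  have hR : ∀ a ∈ Finset.range f, (-1 : ℂ) ^ a * q ^ a * E (q ^ f) n (((a : ℝ) + x) / (f : ℝ))
      = ((1 + q ^ f) / (f : ℂ) ^ n) * ∑' j : ℕ, g (j * f + a) := by
    intro a ha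
    rw [hE, ← mul_assoc, ← tsum_mul_left, ← tsum_mul_left]
    refine tsum_congr fun j => ?_
    have hterm : ((((j : ℝ) + ((a : ℝ) + x) / (f : ℝ)) : ℝ) : ℂ)
        = (((j * f + a : ℕ) : ℂ) + (x : ℂ)) / (f : ℂ) := by
      push_cast
      field_simp
      ring
    have hsign : (-q) ^ (j * f + a) = (-1 : ℂ) ^ j * (q ^ f) ^ j * ((-1) ^ a * q ^ a) := by
      rw [pow_add, mul_comm j f, pow_mul, hf.neg_pow, neg_pow, neg_pow q]
      try ring
    rw [hterm, div_pow]
    simp only [hgdef]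
    rw [hsign]
    field_simp
    try ring
  rw [Finset.sum_congr rfl hR, ← Finset.mul_sum]
  -- the key series splitting
  have key : ∑ a ∈ Finset.range f, ∑' j : ℕ, g (j * f + a) = ∑' k : ℕ, g k := by
    let e : ℕ ≃ Fin f × ℕ := (Nat.divModEquiv f).trans (Equiv.prodComm _ _)
    have hs : Summable fun p : Fin f × ℕ => g (e.symm p) := hg.comp_injective e.symm.injective
    have h2 : ∑' k : ℕ, g k = ∑' p : Fin f × ℕ, g (e.symm p) := (e.symm.tsum_eq g).symm
    rw [h2, Summable.tsum_prod hs, tsum_fintype]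
    have h3 : ∀ a : Fin f, ∑' j : ℕ, g (e.symm (a, j)) = ∑' j : ℕ, g (j * f + (a : ℕ)) :=
      fun a => tsum_congr fun j => rfl
    simp only [h3]
    exact (Fin.sum_univ_eq_sum_range (fun a => ∑' j : ℕ, g (j * f + a)) f).symm
  rw [key]
  field_simp
end
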